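/- Let N ≥ 1 be an integer and let ρ_N be the unscaled GSE eigenvalue density. Then ρ_N satisfies, for every real x, the fifth order linear ordinary differential equation −(1/4)·ρ_N^{(5)}(x) + 5·((1/4)·x² − N − 1/4)·ρ_N'''(x) − (3/2)·x·ρ_N''(x) + (−x⁴ + (8N+2)·x² − 16N² − 8N + 1/2)·ρ_N'(x) + x·(x² − 4N − 1)·ρ_N(x) = 0. -/

import Mathlib

open Nat MeasureTheory

/-!
Write `g(x) = e^{-x²/2}`, `H = H_{n+1}` and `G = H_n`. Since `g' = -x g`, `Q_n' = g G`,
`H' = 2(n+1) G` and `G' = 2x G - H`, the functions `g Q_n (H a + G b) + g² (G² c + H G d + H² e)`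
with polynomial coefficients are closed under differentiation, which acts on `(a, b, c, d, e)` by an
explicit first-order operator. Up to the factor `B_N⁻¹` the density is such a function for
`n = 2N - 1`, so its derivatives are obtained by iterating that operator and the differential
equation becomes a polynomial identity in `x`, `N` and the values `g, Q_n, H, G`. Nothing uses the
parity of `n`: the identity holds with `N = (n + 1) / 2` for every `n`.
-/

/-- The physicists' Hermite polynomials, via the recurrence
`H_0 = 1`, `H_1 = 2x`, `H_{n+2}(x) = 2x·H_{n+1}(x) − 2(n+1)·H_n(x)`. -/
def Hphys : ℕ → ℝ → ℝ
  | 0 => fun _ => 1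
  | 1 => fun x => 2 * x
  | n + 2 => fun x => 2 * x * Hphys (n + 1) x - 2 * ((n : ℝ) + 1) * Hphys n x

/-- `Q_n(x) = ∫_{−∞}^{x} e^{−t²/2} H_n(t) dt`. -/
noncomputable def Qfun (n : ℕ) (x : ℝ) : ℝ :=
  ∫ t in Set.Iic x, Real.exp (-t ^ 2 / 2) * Hphys n t

/-- `B_N = √π·2^{2N+1}·(2N−1)!`. -/
noncomputable def Bconst (N : ℕ) : ℝ :=
  Real.sqrt Real.pi * 2 ^ (2 * N + 1) * ((2 * N - 1)! : ℝ)

/-- The (unscaled) GSE eigenvalue density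
`ρ_N(x) = B_N⁻¹(e^{−x²}(H_{2N}'H_{2N−1} − H_{2N}H_{2N−1}') + e^{−x²/2}H_{2N}Q_{2N−1})`. -/
noncomputable def gseDensity (N : ℕ) (x : ℝ) : ℝ :=
  (Bconst N)⁻¹ *
    (Real.exp (-x ^ 2) *
        (deriv (Hphys (2 * N)) x * Hphys (2 * N - 1) x -
          Hphys (2 * N) x * deriv (Hphys (2 * N - 1)) x) +
      Real.exp (-x ^ 2 / 2) * Hphys (2 * N) x * Qfun (2 * N - 1) x)

open Polynomial

-- Unlike `H_n' = 2n H_{n-1}`, this form of the derivative needs no case split on `n = 0`.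
theorem hasDerivAt_Hphys : ∀ (n : ℕ) (x : ℝ),
    HasDerivAt (Hphys n) (2 * x * Hphys n x - Hphys (n + 1) x) x
  | 0, x => by simpa [Hphys] using hasDerivAt_const x (1 : ℝ)
  | 1, x => by simpa [Hphys] using (hasDerivAt_id x).const_mul (2 : ℝ)
  | n + 2, x => by
    have h := (((hasDerivAt_id x).const_mul 2).mul (hasDerivAt_Hphys (n + 1) x)).sub
      ((hasDerivAt_Hphys n x).const_mul (2 * ((n : ℝ) + 1)))
    refine h.congr_deriv ?_
    simp only [Hphys, id]
    push_cast
    ring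

theorem hasDerivAt_Hphys_succ (n : ℕ) (x : ℝ) :
    HasDerivAt (Hphys (n + 1)) (2 * (n + 1) * Hphys n x) x := by
  refine (hasDerivAt_Hphys (n + 1) x).congr_deriv ?_
  simp only [Hphys]
  ring

theorem continuous_Hphys (n : ℕ) : Continuous (Hphys n) :=
  continuous_iff_continuousAt.2 fun x => (hasDerivAt_Hphys n x).continuousAt

theorem exists_eval_eq_Hphys : ∀ n : ℕ, ∃ p : ℝ[X], ∀ x, p.eval x = Hphys n x
  | 0 => ⟨1, fun x => by simp [Hphys]⟩
  | 1 => ⟨2 * X, fun x => by simp [Hphys]⟩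
  | n + 2 => by
    obtain ⟨p, hp⟩ := exists_eval_eq_Hphys (n + 1)
    obtain ⟨q, hq⟩ := exists_eval_eq_Hphys n
    exact ⟨2 * X * p - C (2 * ((n : ℝ) + 1)) * q, fun x => by simp [Hphys, hp, hq]⟩

theorem integrable_exp_neg_mul_sq_mul_eval {b : ℝ} (hb : 0 < b) (p : ℝ[X]) :
    Integrable fun t : ℝ => Real.exp (-b * t ^ 2) * p.eval t := by
  induction p using Polynomial.induction_on' with
  | add p q hp hq => simpa only [eval_add, mul_add, Pi.add_def] using hp.add hq
  | monomial k a =>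
    have h := (integrable_rpow_mul_exp_neg_mul_sq hb (s := k)
      (neg_one_lt_zero.trans_le k.cast_nonneg)).const_mul a
    refine h.congr (Filter.Eventually.of_forall fun t => ?_)
    simp only [Real.rpow_natCast, eval_monomial]
    ring

theorem integrable_exp_neg_sq_div_two_mul_Hphys (n : ℕ) :
    Integrable fun t : ℝ => Real.exp (-t ^ 2 / 2) * Hphys n t := by
  obtain ⟨p, hp⟩ := exists_eval_eq_Hphys n
  refine (integrable_exp_neg_mul_sq_mul_eval one_half_pos p).congr (.of_forall fun t => ?_)
  dsimp only
  rw [hp]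
  ring_nf

theorem hasDerivAt_integral_Iic {E : Type*} [NormedAddCommGroup E] [NormedSpace ℝ E]
    [CompleteSpace E] {f : ℝ → E} (hf : Integrable f) (hc : Continuous f) (x : ℝ) :
    HasDerivAt (fun y => ∫ t in Set.Iic y, f t) (f x) x := by
  have key : ∀ y, ∫ t in Set.Iic y, f t = (∫ t in Set.Iic 0, f t) + ∫ t in (0 : ℝ)..y, f t :=
    fun y => by
      rw [← intervalIntegral.integral_Iic_sub_Iic hf.integrableOn hf.integrableOn]
      abel
  exact ((hc.integral_hasStrictDerivAt 0 x).hasDerivAt.const_add _).congr_of_eventuallyEq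
    (.of_forall key)

theorem hasDerivAt_Qfun (n : ℕ) (x : ℝ) :
    HasDerivAt (Qfun n) (Real.exp (-x ^ 2 / 2) * Hphys n x) x :=
  hasDerivAt_integral_Iic (integrable_exp_neg_sq_div_two_mul_Hphys n)
    ((by fun_prop : Continuous fun t : ℝ => Real.exp (-t ^ 2 / 2)).mul (continuous_Hphys n)) x

/-- The coefficients `(a, b, c, d, e)` of
`g Q_n (H_{n+1} a + H_n b) + g² (H_n² c + H_{n+1} H_n d + H_{n+1}² e)`, where `g(x) = e^{-x²/2}`. -/
structure HermiteCoeffs where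
  (a b c d e : ℝ[X])

namespace HermiteCoeffs

variable (n : ℕ)

noncomputable def toFun (p : HermiteCoeffs) (x : ℝ) : ℝ :=
  Real.exp (-x ^ 2 / 2) * Qfun n x * (Hphys (n + 1) x * p.a.eval x + Hphys n x * p.b.eval x) +
    Real.exp (-x ^ 2 / 2) ^ 2 * (Hphys n x ^ 2 * p.c.eval x +
      Hphys (n + 1) x * Hphys n x * p.d.eval x + Hphys (n + 1) x ^ 2 * p.e.eval x)

/-- Read off from `g' = -x g`, `Q_n' = g H_n`, `H_{n+1}' = 2(n+1) H_n`, `H_n' = 2x H_n - H_{n+1}`.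
-/
noncomputable def derivative (p : HermiteCoeffs) : HermiteCoeffs where
  a := Polynomial.derivative p.a - X * p.a - p.b
  b := C (2 * ((n : ℝ) + 1)) * p.a + X * p.b + Polynomial.derivative p.b
  c := p.b + 2 * X * p.c + C (2 * ((n : ℝ) + 1)) * p.d + Polynomial.derivative p.c
  d := p.a - 2 * p.c + C (4 * ((n : ℝ) + 1)) * p.e + Polynomial.derivative p.d
  e := -p.d - 2 * X * p.e + Polynomial.derivative p.e

theorem hasDerivAt_toFun (p : HermiteCoeffs) (x : ℝ) :
    HasDerivAt (p.toFun n) ((p.derivative n).toFun n x) x := by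
  have hg : HasDerivAt (fun y : ℝ => Real.exp (-y ^ 2 / 2)) (Real.exp (-x ^ 2 / 2) * -x) x := by
    convert (((hasDerivAt_id' x).fun_pow 2).fun_neg.div_const 2).exp using 1
    ring
  have hQ := hasDerivAt_Qfun n x
  have hH := hasDerivAt_Hphys_succ n x
  have hG := hasDerivAt_Hphys n x
  have h := ((hg.mul hQ).mul ((hH.mul (p.a.hasDerivAt x)).add (hG.mul (p.b.hasDerivAt x)))).add
    ((hg.pow 2).mul ((((hG.pow 2).mul (p.c.hasDerivAt x)).add
      ((hH.mul hG).mul (p.d.hasDerivAt x))).add ((hH.pow 2).mul (p.e.hasDerivAt x))))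
  refine h.congr_deriv ?_
  simp only [toFun, derivative, Pi.add_apply, Pi.mul_apply, Pi.pow_apply, eval_add, eval_sub,
    eval_mul, eval_neg, eval_X, eval_C, eval_ofNat]
  ring

theorem iteratedDeriv_toFun (p : HermiteCoeffs) (k : ℕ) :
    iteratedDeriv k (p.toFun n) = ((derivative n)^[k] p).toFun n := by
  induction k with
  | zero => simp
  | succ k ih =>
    rw [iteratedDeriv_succ, ih, Function.iterate_succ_apply']
    exact funext fun x => (hasDerivAt_toFun n _ x).deriv

end HermiteCoeffs

noncomputable def gseKernel (n : ℕ) (x : ℝ) : ℝ :=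
  Real.exp (-x ^ 2) *
      (deriv (Hphys (n + 1)) x * Hphys n x - Hphys (n + 1) x * deriv (Hphys n) x) +
    Real.exp (-x ^ 2 / 2) * Hphys (n + 1) x * Qfun n x

noncomputable def gseKernelCoeffs (n : ℕ) : HermiteCoeffs :=
  ⟨1, 0, C (2 * ((n : ℝ) + 1)), -2 * X, 1⟩

theorem gseKernel_eq_toFun (n : ℕ) : gseKernel n = (gseKernelCoeffs n).toFun n := by
  funext x
  have hexp : Real.exp (-x ^ 2) = Real.exp (-x ^ 2 / 2) ^ 2 := by
    rw [← Real.exp_nat_mul]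
    ring_nf
  simp only [gseKernel, HermiteCoeffs.toFun, gseKernelCoeffs, (hasDerivAt_Hphys n x).deriv,
    (hasDerivAt_Hphys_succ n x).deriv, hexp, eval_one, eval_zero, eval_C, eval_mul, eval_neg,
    eval_X, eval_ofNat]
  ring

theorem gseKernel_ode (n : ℕ) (N : ℝ) (hN : (n : ℝ) + 1 = 2 * N) (x : ℝ) :
    -(1 / 4) * iteratedDeriv 5 (gseKernel n) x +
        5 * ((1 / 4) * x ^ 2 - N - 1 / 4) * iteratedDeriv 3 (gseKernel n) x -
        (3 / 2) * x * iteratedDeriv 2 (gseKernel n) x +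
        (-x ^ 4 + (8 * N + 2) * x ^ 2 - 16 * N ^ 2 - 8 * N + 1 / 2) *
          deriv (gseKernel n) x +
        x * (x ^ 2 - 4 * N - 1) * gseKernel n x = 0 := by
  rw [← iteratedDeriv_one, gseKernel_eq_toFun]
  simp only [HermiteCoeffs.iteratedDeriv_toFun, Function.iterate_succ_apply',
    Function.iterate_zero_apply, HermiteCoeffs.toFun, HermiteCoeffs.derivative, gseKernelCoeffs,
    derivative_add, derivative_sub, derivative_mul, derivative_neg, derivative_X, derivative_C,
    derivative_one, derivative_zero, derivative_ofNat, eval_add, eval_sub, eval_mul, eval_neg,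
    eval_X, eval_C, eval_one, eval_zero, eval_ofNat]
  rw [hN]
  ring

theorem gseDensity_eq_mul_gseKernel {N : ℕ} (hN : 1 ≤ N) :
    gseDensity N = fun x => (Bconst N)⁻¹ * gseKernel (2 * N - 1) x := by
  obtain ⟨n, hn⟩ : ∃ n, 2 * N = n + 1 := ⟨2 * N - 1, by omega⟩
  ext x
  rw [gseDensity, gseKernel, show 2 * N - 1 = n by omega, hn]

/-- The unscaled GSE eigenvalue density satisfies the fifth order linear ODE
`−(1/4)ρ⁽⁵⁾ + 5((1/4)x²−N−1/4)ρ''' − (3/2)xρ''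
  + (−x⁴+(8N+2)x²−16N²−8N+1/2)ρ' + x(x²−4N−1)ρ = 0`. -/
theorem gseDensity_ode (N : ℕ) (hN : 1 ≤ N) (x : ℝ) :
    -(1 / 4) * iteratedDeriv 5 (gseDensity N) x +
        5 * ((1 / 4) * x ^ 2 - (N : ℝ) - 1 / 4) * iteratedDeriv 3 (gseDensity N) x -
        (3 / 2) * x * iteratedDeriv 2 (gseDensity N) x +
        (-x ^ 4 + (8 * (N : ℝ) + 2) * x ^ 2 - 16 * (N : ℝ) ^ 2 - 8 * (N : ℝ) + 1 / 2) *
          deriv (gseDensity N) x +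
        x * (x ^ 2 - 4 * (N : ℝ) - 1) * gseDensity N x = 0 := by
  have hn : ((2 * N - 1 : ℕ) : ℝ) + 1 = 2 * N := by
    rw [Nat.cast_sub (by omega)]
    push_cast
    ring
  simp only [gseDensity_eq_mul_gseKernel hN, iteratedDeriv_const_mul_field, deriv_const_mul_field']
  linear_combination (Bconst N)⁻¹ * gseKernel_ode (2 * N - 1) N hn x
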